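/- arXiv:2107.08912 — 2 statements merged into one kernel-verified Lean document; each statement's English description precedes it below -/
import Mathlib

section
/- Let Q₁,…,Q_k be positive definite n×n matrices and p_{ij} > 0 for i < j. Then the Minkowski sum E(Q₁) ⊕ ⋯ ⊕ E(Q_k) is contained in the ellipsoid E(Q) with Q = Σ_i Q_i + Σ_{i<j} (p_{ij} Q_i + p_{ij}^{-1} Q_j). -/
open Matrix Pointwise Finset

/-- Ellipsoid with shape matrix `Q`. -/
def Ell {n : ℕ} (Q : Matrix (Fin n) (Fin n) ℝ) : Set (Fin n → ℝ) :=
  {x | x ⬝ᵥ (Q⁻¹ *ᵥ x) ≤ 1}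

/-!
The support function of `E(Q)` is `u ↦ √(uᵀ Q u)`: a point `c ∈ E(Q)` satisfies
`c ⬝ u ≤ √(uᵀ Q u)` by Cauchy–Schwarz for the form `Q` (write `c = Q w` with `wᵀ Q w ≤ 1`), and
conversely testing against `u = Q⁻¹ x` shows that a point obeying all these bounds lies in `E(Q)`.
Support functions add under Minkowski sums, so it suffices to show
`∑ᵢ √(uᵀ Qᵢ u) ≤ √(uᵀ Q u)`. Squaring, the diagonal terms match and each cross term is bounded by
`2 s t ≤ p s² + p⁻¹ t²`.
-/

section SupportFunction

variable {n : ℕ}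

lemma dotProduct_le_sqrt_of_mem_Ell {A : Matrix (Fin n) (Fin n) ℝ} (hA : A.PosDef)
    {c : Fin n → ℝ} (hc : c ∈ Ell A) (u : Fin n → ℝ) :
    c ⬝ᵥ u ≤ √(u ⬝ᵥ (A *ᵥ u)) := by
  have hdet : IsUnit A.det := isUnit_iff_ne_zero.mpr hA.det_pos.ne'
  have hsymm : A.IsSymm := isHermitian_iff_isSymm.mp hA.1
  set B := A.toBilin'
  have hB : ∀ v v', B v v' = (A *ᵥ v) ⬝ᵥ v' := fun v v' => by
    rw [toBilin'_apply', dotProduct_mulVec, ← mulVec_transpose, hsymm.eq]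
  have hBnonneg : ∀ v, 0 ≤ B v v := fun v => by
    simpa [B, toBilin'_apply'] using hA.posSemidef.dotProduct_mulVec_nonneg v
  set w := A⁻¹ *ᵥ c
  have hAw : A *ᵥ w = c := by
    rw [mulVec_mulVec, mul_nonsing_inv _ hdet, one_mulVec]
  have hBww : B w w ≤ 1 := by
    rw [hB, hAw]
    exact hc
  have hCS : (B w u) ^ 2 ≤ B w w * B u u :=
    B.apply_sq_le_of_symm hBnonneg
      (LinearMap.BilinForm.isSymm_iff.mp (isSymm_toBilin'_iff_isSymm.mpr hsymm)) w u
  rw [hB w u, hAw] at hCS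
  refine Real.le_sqrt_of_sq_le (hCS.trans ?_)
  simpa [B, toBilin'_apply'] using mul_le_of_le_one_left (hBnonneg u) hBww

lemma mem_Ell_of_forall_dotProduct_le_sqrt (A : Matrix (Fin n) (Fin n) ℝ) {x : Fin n → ℝ}
    (hx : ∀ u, x ⬝ᵥ u ≤ √(u ⬝ᵥ (A *ᵥ u))) : x ∈ Ell A := by
  by_cases hdet : IsUnit A.det
  · have ht := hx (A⁻¹ *ᵥ x)
    rw [mulVec_mulVec, mul_nonsing_inv _ hdet, one_mulVec, dotProduct_comm (A⁻¹ *ᵥ x)] at ht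
    show x ⬝ᵥ (A⁻¹ *ᵥ x) ≤ 1
    rcases le_or_gt (x ⬝ᵥ (A⁻¹ *ᵥ x)) 0 with ht0 | ht0
    · linarith
    · have hsq := Real.sq_sqrt ht0.le
      nlinarith [Real.sqrt_nonneg (x ⬝ᵥ (A⁻¹ *ᵥ x))]
  · -- junk value: a singular `A` has `A⁻¹ = 0`, so `Ell A` is the whole space
    simp [Ell, nonsing_inv_apply_not_isUnit A hdet]

end SupportFunction

section PairSums

variable {ι : Type*} [Fintype ι] [LinearOrder ι]

theorem Finset.sum_sum_eq_sum_add_sum_sum_lt {M : Type*} [AddCommMonoid M] (f : ι → ι → M) :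
    ∑ i, ∑ j, f i j = ∑ i, f i i + ∑ i, ∑ j, if i < j then f i j + f j i else 0 := by
  have hsplit : ∀ i j, (if i < j then f i j + f j i else 0) =
      (if i < j then f i j else 0) + (if i < j then f j i else 0) := fun i j => by
    split_ifs <;> simp
  have hswap : ∑ i, ∑ j, (if i < j then f j i else 0) = ∑ i, ∑ j, if j < i then f i j else 0 :=
    Finset.sum_comm
  simp only [hsplit, Finset.sum_add_distrib, hswap]
  rw [← Finset.sum_add_distrib, ← Finset.sum_add_distrib]
  refine Finset.sum_congr rfl fun i _ => ?_
  rw [← Finset.sum_ite_eq_of_mem' Finset.univ i (fun j => f i j) (Finset.mem_univ i),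
    ← Finset.sum_add_distrib, ← Finset.sum_add_distrib]
  refine Finset.sum_congr rfl fun j _ => ?_
  rcases lt_trichotomy i j with h | rfl | h
  · simp [h, h.ne', not_lt_of_gt h]
  · simp
  · simp [h, h.ne, not_lt_of_gt h]

end PairSums

section Scalar

variable {K : Type*} [Field K] [LinearOrder K] [IsStrictOrderedRing K]

lemma two_mul_le_mul_sq_add_inv_mul_sq {p : K} (hp : 0 < p) (a b : K) :
    2 * a * b ≤ p * a ^ 2 + p⁻¹ * b ^ 2 := by
  have key : p * a ^ 2 + p⁻¹ * b ^ 2 - 2 * a * b = p⁻¹ * (p * a - b) ^ 2 := by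
    field_simp
    ring
  nlinarith [mul_nonneg (inv_pos.mpr hp).le (sq_nonneg (p * a - b))]

lemma sq_sum_le_sum_sq_add_sum_sum_lt {ι : Type*} [Fintype ι] [LinearOrder ι]
    (s : ι → K) (p : ι → ι → K) (hp : ∀ i j, i < j → 0 < p i j) :
    (∑ i, s i) ^ 2 ≤
      ∑ i, s i ^ 2 + ∑ i, ∑ j, if i < j then p i j * s i ^ 2 + (p i j)⁻¹ * s j ^ 2 else 0 := by
  rw [sq, Finset.sum_mul_sum, Finset.sum_sum_eq_sum_add_sum_sum_lt]
  simp only [← sq]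
  gcongr with i _ j _
  split_ifs with h
  · linarith [two_mul_le_mul_sq_add_inv_mul_sq (hp i j h) (s i) (s j)]
  · rfl

end Scalar

/-- The Minkowski sum `E(Q₁) ⊕ ⋯ ⊕ E(Q_k)` is contained in `E(Q)` with
`Q = Σᵢ Qᵢ + Σ_{i<j} (pᵢⱼ Qᵢ + pᵢⱼ⁻¹ Qⱼ)`. -/
theorem stmt7 {n k : ℕ} (Q : Fin k → Matrix (Fin n) (Fin n) ℝ)
    (hQ : ∀ i, (Q i).PosDef) (p : Fin k → Fin k → ℝ)
    (hp : ∀ i j, i < j → 0 < p i j) :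
    (∑ i, Ell (Q i)) ⊆
      Ell (∑ i, Q i + ∑ i, ∑ j, if i < j then p i j • Q i + (p i j)⁻¹ • Q j else 0) := by
  rintro _ hx
  obtain ⟨c, hc, rfl⟩ := (Set.mem_fintype_sum _ _).mp hx
  refine mem_Ell_of_forall_dotProduct_le_sqrt _ fun u => ?_
  set a := fun i => u ⬝ᵥ (Q i *ᵥ u)
  have ha : ∀ i, √(a i) ^ 2 = a i := fun i =>
    Real.sq_sqrt (by simpa using (hQ i).posSemidef.dotProduct_mulVec_nonneg u)
  have hquad : u ⬝ᵥ ((∑ i, Q i + ∑ i, ∑ j,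
      if i < j then p i j • Q i + (p i j)⁻¹ • Q j else 0) *ᵥ u) =
      ∑ i, a i + ∑ i, ∑ j, if i < j then p i j * a i + (p i j)⁻¹ * a j else 0 := by
    simp only [add_mulVec, sum_mulVec, dotProduct_add, dotProduct_sum, apply_ite (· *ᵥ u),
      apply_ite (u ⬝ᵥ ·), smul_mulVec, dotProduct_smul, smul_eq_mul, zero_mulVec,
      dotProduct_zero, a]
  calc (∑ i, c i) ⬝ᵥ u = ∑ i, c i ⬝ᵥ u := sum_dotProduct _ _ _
    _ ≤ ∑ i, √(a i) := Finset.sum_le_sum fun i _ => dotProduct_le_sqrt_of_mem_Ell (hQ i) (hc i) u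
    _ ≤ _ := Real.le_sqrt_of_sq_le <| by
      simpa only [hquad, ha] using sq_sum_le_sum_sq_add_sum_sum_lt (fun i => √(a i)) p hp
end

section
/- For positive definite Q₁,…,Q_k, the matrix Q* = (Σ_i √tr(Q_i))(Σ_i Q_i/√tr(Q_i)) is positive definite and satisfies E(Q₁) ⊕ ⋯ ⊕ E(Q_k) ⊆ E(Q*). -/
/-!
For positive definite `A`, `xᵀ A⁻¹ x = max_z (2 zᵀx - zᵀ A z)`, attained at `z = A⁻¹ x`.
Write `Q* = Σᵢ cᵢ Qᵢ` with `cᵢ = (Σⱼ √tr Qⱼ) / √tr Qᵢ`, let `x = Σᵢ gᵢ` with `gᵢ ∈ E(Qᵢ)` and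
let `z` be the maximiser for `Q*`. Then `xᵀ Q*⁻¹ x = Σᵢ (2 zᵀgᵢ - cᵢ zᵀ Qᵢ z)`, and the same
inequality applied to `cᵢ Qᵢ` bounds each term by `cᵢ⁻¹ gᵢᵀ Qᵢ⁻¹ gᵢ ≤ cᵢ⁻¹`; these sum to `1`.
-/

open Matrix Pointwise Finset

namespace Matrix

variable {m : Type*} [Fintype m] [DecidableEq m]

/-- No invertibility is needed: for singular `A` both sides vanish, as then `A⁻¹ = 0`. -/
lemma dotProduct_inv_mulVec_eq {R : Type*} [CommRing R] (A : Matrix m m R) (x : m → R) :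
    x ⬝ᵥ (A⁻¹ *ᵥ x) = 2 * ((A⁻¹ *ᵥ x) ⬝ᵥ x) - (A⁻¹ *ᵥ x) ⬝ᵥ (A *ᵥ (A⁻¹ *ᵥ x)) := by
  by_cases hA : IsUnit A.det
  · rw [mulVec_mulVec, mul_nonsing_inv A hA, one_mulVec, dotProduct_comm]
    ring
  · simp [nonsing_inv_apply_not_isUnit A hA]

lemma PosDef.two_mul_dotProduct_sub_le {A : Matrix m m ℝ} (hA : A.PosDef) (x z : m → ℝ) :
    2 * (z ⬝ᵥ x) - z ⬝ᵥ (A *ᵥ z) ≤ x ⬝ᵥ (A⁻¹ *ᵥ x) := by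
  set y := A⁻¹ *ᵥ x
  have hAy : A *ᵥ y = x := by
    rw [mulVec_mulVec, mul_nonsing_inv A ((isUnit_iff_isUnit_det A).1 hA.isUnit), one_mulVec]
  have hsymm : y ⬝ᵥ (A *ᵥ z) = z ⬝ᵥ (A *ᵥ y) := by
    rw [dotProduct_mulVec, ← mulVec_transpose, ← conjTranspose_eq_transpose_of_trivial,
      hA.isHermitian.eq, dotProduct_comm]
  have hsq : 0 ≤ (z - y) ⬝ᵥ (A *ᵥ (z - y)) := by
    simpa using hA.posSemidef.dotProduct_mulVec_nonneg (z - y)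
  rw [mulVec_sub, sub_dotProduct, dotProduct_sub, dotProduct_sub, hsymm, hAy] at hsq
  linarith [dotProduct_comm x y]

lemma PosDef.two_mul_dotProduct_sub_mul_le {A : Matrix m m ℝ} (hA : A.PosDef) {c : ℝ}
    (hc : 0 < c) (x z : m → ℝ) :
    2 * (z ⬝ᵥ x) - c * (z ⬝ᵥ (A *ᵥ z)) ≤ c⁻¹ * (x ⬝ᵥ (A⁻¹ *ᵥ x)) := by
  rw [le_inv_mul_iff₀ hc]
  have := hA.two_mul_dotProduct_sub_le x (c • z)
  simp only [smul_dotProduct, mulVec_smul, dotProduct_smul, smul_eq_mul] at this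
  linarith

lemma dotProduct_inv_sum_smul_mulVec_le {ι : Type*} [Fintype ι] {A : ι → Matrix m m ℝ}
    (hA : ∀ i, (A i).PosDef) {c : ι → ℝ} (hc : ∀ i, 0 < c i) (g : ι → m → ℝ) :
    (∑ i, g i) ⬝ᵥ ((∑ i, c i • A i)⁻¹ *ᵥ ∑ i, g i) ≤
      ∑ i, (c i)⁻¹ * (g i ⬝ᵥ ((A i)⁻¹ *ᵥ g i)) := by
  set y := (∑ i, c i • A i)⁻¹ *ᵥ ∑ i, g i
  calc (∑ i, g i) ⬝ᵥ ((∑ i, c i • A i)⁻¹ *ᵥ ∑ i, g i)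
      = 2 * (y ⬝ᵥ ∑ i, g i) - y ⬝ᵥ ((∑ i, c i • A i) *ᵥ y) := dotProduct_inv_mulVec_eq _ _
    _ = ∑ i, (2 * (y ⬝ᵥ g i) - c i * (y ⬝ᵥ (A i *ᵥ y))) := by
        simp only [dotProduct_sum, sum_mulVec, smul_mulVec, dotProduct_smul, smul_eq_mul,
          mul_sum, sum_sub_distrib]
    _ ≤ ∑ i, (c i)⁻¹ * (g i ⬝ᵥ ((A i)⁻¹ *ᵥ g i)) :=
        sum_le_sum fun i _ => (hA i).two_mul_dotProduct_sub_mul_le (hc i) (g i) y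

end Matrix

theorem sum_ell_subset_ell_sum_smul {n : ℕ} {ι : Type*} [Fintype ι]
    {A : ι → Matrix (Fin n) (Fin n) ℝ} (hA : ∀ i, (A i).PosDef) {c : ι → ℝ}
    (hc : ∀ i, 0 < c i) (hc_inv : ∑ i, (c i)⁻¹ ≤ 1) :
    ∑ i, Ell (A i) ⊆ Ell (∑ i, c i • A i) := by
  intro x hx
  obtain ⟨g, hg, rfl⟩ := (Set.mem_fintype_sum _ _).1 hx
  calc _ ≤ ∑ i, (c i)⁻¹ * (g i ⬝ᵥ ((A i)⁻¹ *ᵥ g i)) := dotProduct_inv_sum_smul_mulVec_le hA hc g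
    _ ≤ ∑ i, (c i)⁻¹ := sum_le_sum fun i _ =>
        mul_le_of_le_one_right (inv_pos.2 (hc i)).le (hg i)
    _ ≤ 1 := hc_inv

/-- `Q* = (Σᵢ √tr Qᵢ)(Σᵢ Qᵢ/√tr Qᵢ)` is positive definite and
`E(Q₁) ⊕ ⋯ ⊕ E(Q_k) ⊆ E(Q*)`. -/
theorem stmt13 {n k : ℕ} (hk : 0 < k) (Q : Fin k → Matrix (Fin n) (Fin n) ℝ)
    (hQ : ∀ i, (Q i).PosDef)
    (Qstar : Matrix (Fin n) (Fin n) ℝ)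
    (hQstar : Qstar = (∑ i, Real.sqrt (Q i).trace) • ∑ i, (Real.sqrt (Q i).trace)⁻¹ • Q i) :
    Qstar.PosDef ∧ (∑ i, Ell (Q i)) ⊆ Ell Qstar := by
  rcases isEmpty_or_nonempty (Fin n) with _ | _
  · exact ⟨⟨Subsingleton.elim _ _, fun x hx => absurd (Subsingleton.elim x 0) hx⟩,
      fun x _ => by simp [Ell, dotProduct_of_isEmpty]⟩
  set t : Fin k → ℝ := fun i => √(Q i).trace
  have ht : ∀ i, 0 < t i := fun i => Real.sqrt_pos.2 (hQ i).trace_pos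
  have : Nonempty (Fin k) := ⟨⟨0, hk⟩⟩
  have hs : 0 < ∑ i, t i := sum_pos (fun i _ => ht i) univ_nonempty
  have hc : ∀ i, 0 < (∑ j, t j) * (t i)⁻¹ := fun i => mul_pos hs (inv_pos.2 (ht i))
  have hQstar_sum : Qstar = ∑ i, ((∑ j, t j) * (t i)⁻¹) • Q i := by
    simp only [hQstar, smul_sum, smul_smul]
    rfl
  subst hQstar_sum
  refine ⟨posDef_sum univ_nonempty fun i _ => (hQ i).smul (hc i),
    sum_ell_subset_ell_sum_smul hQ hc ?_⟩
  simp only [mul_inv, inv_inv, ← mul_sum, inv_mul_cancel₀ hs.ne', le_refl]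
end
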